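/- With definitions as above, the generalized Apostol-Bernoulli poly-Daehee polynomials satisfy the addition theorem in the order and second argument: 𝔅𝔇_{n,a+b}^{[k,m-1]}(γ,η+ω;λ) = Σ_{j=0}^n C(n,j) · 𝔅𝔇_{n-j,a}^{[k,m-1]}(γ,η;λ) · 𝔅_{j,b}^{[m-1]}(ω;λ). -/

import Mathlib

open PowerSeries Finset

noncomputable section

variable (F : Type*) [Field F] [CharZero F]

/-- Exponential generating function `Σ c n * x^n / n!`. -/
def egf (c : ℕ → F) : PowerSeries F := PowerSeries.mk fun n => c n / n.factorial

/-- `log(1+x)` as a formal power series. -/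
def logOnePlus : PowerSeries F := PowerSeries.mk fun n => if n = 0 then 0 else (-1) ^ (n + 1) / n

/-- `e^{-x}` as a formal power series. -/
def expNeg : PowerSeries F := PowerSeries.mk fun n => (-1) ^ n / n.factorial

/-- `Li_k(1 - e^{-x})`: since `(1-e^{-x})^m` has order `≥ m`, the `n`-th coefficient of the
composition is the finite sum `Σ_{m=1}^{n} m^{-k} * coeff n ((1-e^{-x})^m)`. -/
def liComp (k : ℤ) : PowerSeries F :=
  PowerSeries.mk fun n => ∑ m ∈ Finset.range (n + 1),
    (if m = 0 then 0 else ((m : F) ^ k)⁻¹) * PowerSeries.coeff n ((1 - expNeg F) ^ m)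

/-- `(1+x)^γ = Σ_j (γ)_j x^j/j!` with `(γ)_j = γ(γ-1)⋯(γ-j+1)` the falling factorial. -/
def onePlusPow (γ : F) : PowerSeries F := egf F fun j => ∏ i ∈ Finset.range j, (γ - i)

/-- Truncated exponential `Σ_{l<m} x^l/l!`. -/
def truncExp (m : ℕ) : PowerSeries F :=
  PowerSeries.mk fun l => if l < m then ((l.factorial : F))⁻¹ else 0

/-- `λ e^x - Σ_{l<m} x^l/l!`, the denominator in the generalized Apostol-Bernoulli
generating function. -/
def bden (lam : F) (m : ℕ) : PowerSeries F := PowerSeries.C lam * PowerSeries.exp F - truncExp F m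

/-! Cancelling the factor `Li_k(1 - e^{-x}) · (λeˣ - Σ_{l<m} xˡ/l!)^(a+b)` from the
generating-function identity `G_{a+b}(γ, η + ω) = G_a(γ, η) · H_b(ω)` (a consequence of
`e^{ηx} e^{ωx} = e^{(η+ω)x}`) identifies the exponential generating function of the left-hand
side with the product of two exponential generating functions, whose coefficients are the
binomial convolution on the right-hand side. -/

lemma egf_mul_egf (c d : ℕ → F) :
    egf F c * egf F d =
      egf F (fun n => ∑ j ∈ Finset.range (n + 1), (n.choose j : F) * c (n - j) * d j) := by
  ext n
  simp only [egf, coeff_mul, coeff_mk]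
  rw [Nat.sum_antidiagonal_eq_sum_range_succ fun i j => c i / i.factorial * (d j / j.factorial),
    sum_div, ← sum_range_reflect]
  refine sum_congr rfl fun i hi => ?_
  have hin : i ≤ n := Nat.lt_succ_iff.mp (mem_range.mp hi)
  simp only [Nat.succ_sub_one, Nat.sub_sub_self hin]
  have hn : (n.factorial : F) ≠ 0 := Nat.cast_ne_zero.mpr n.factorial_ne_zero
  rw [Nat.cast_choose F hin]
  field_simp

lemma egf_injective : Function.Injective (egf F) := by
  intro c d h
  funext n
  have hn := congrArg (coeff n) h
  simp only [egf, coeff_mk] at hn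
  exact div_left_inj' (Nat.cast_ne_zero.mpr n.factorial_ne_zero) |>.mp hn

lemma coeff_one_liComp {K : Type*} [Field K] (k : ℤ) : coeff 1 (liComp K k) = 1 := by
  simp [liComp, expNeg, sum_range_succ, coeff_one]

lemma liComp_ne_zero {K : Type*} [Field K] (k : ℤ) : liComp K k ≠ 0 := fun h => by
  simpa [h] using coeff_one_liComp (K := K) k

lemma coeff_bden_self (lam : F) (m : ℕ) : coeff m (bden F lam m) = lam / m.factorial := by
  simp [bden, truncExp, div_eq_mul_inv]

lemma coeff_zero_bden (lam : F) {m : ℕ} (hm : 1 ≤ m) : coeff 0 (bden F lam m) = lam - 1 := by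
  simp [bden, truncExp, Nat.pos_iff_ne_zero.mp hm]

lemma bden_ne_zero (lam : F) {m : ℕ} (hm : 1 ≤ m) : bden F lam m ≠ 0 := fun h => by
  by_cases hl : lam = 1
  · subst hl
    simpa [h, eq_comm, Nat.factorial_ne_zero] using coeff_bden_self F 1 m
  · exact hl (sub_eq_zero.mp (by simpa [h] using (coeff_zero_bden F lam hm).symm))

theorem gabpdp_addition_order (k : ℤ) (m a b : ℕ) (hm : 1 ≤ m)
    (γ η ω lam : F) (BD Bb BDab : ℕ → F)
    (hBD : liComp F k * bden F lam m ^ a * egf F BD =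
      onePlusPow F γ * logOnePlus F * PowerSeries.X ^ (m * a) *
        PowerSeries.rescale η (PowerSeries.exp F))
    (hBb : bden F lam m ^ b * egf F Bb =
      PowerSeries.X ^ (m * b) * PowerSeries.rescale ω (PowerSeries.exp F))
    (hBDab : liComp F k * bden F lam m ^ (a + b) * egf F BDab =
      onePlusPow F γ * logOnePlus F * PowerSeries.X ^ (m * (a + b)) *
        PowerSeries.rescale (η + ω) (PowerSeries.exp F)) :
    ∀ n : ℕ, BDab n = ∑ j ∈ Finset.range (n + 1), (n.choose j : F) * BD (n - j) * Bb j := by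
  have hprod : liComp F k * bden F lam m ^ (a + b) * egf F BDab =
      liComp F k * bden F lam m ^ (a + b) * (egf F BD * egf F Bb) :=
    calc liComp F k * bden F lam m ^ (a + b) * egf F BDab
        = (onePlusPow F γ * logOnePlus F * PowerSeries.X ^ (m * a) *
            PowerSeries.rescale η (PowerSeries.exp F)) *
          (PowerSeries.X ^ (m * b) * PowerSeries.rescale ω (PowerSeries.exp F)) := by
          rw [hBDab, ← PowerSeries.exp_mul_exp_eq_exp_add η ω, Nat.mul_add, pow_add]
          ring
      _ = liComp F k * bden F lam m ^ (a + b) * (egf F BD * egf F Bb) := by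
          rw [← hBD, ← hBb, pow_add]
          ring
  have hne : liComp F k * bden F lam m ^ (a + b) ≠ 0 :=
    mul_ne_zero (liComp_ne_zero k) (pow_ne_zero _ (bden_ne_zero F lam hm))
  rw [egf_mul_egf] at hprod
  exact congrFun (egf_injective F (mul_left_cancel₀ hne hprod))
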